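/- arXiv:2604.00236 — 3 statements merged into one kernel-verified Lean document; each statement's English description precedes it below -/
import Mathlib

section
/- Expansion composed with coarsening is idempotent on adjacency structure: if H = U(C(G)) is the expansion of the coarsening of G under partition C, then coarsening H by the same partition C yields a coarse graph whose adjacency is A' + pattern of nonempty-cluster self-loops off the diagonal; in particular C(H) has the same coarse adjacency A' as C(G) on distinct clusters u ≠ v with n_u, n_v ≥ 1. -/
/-!
For the assignment matrix `C` of `c` one has `C B Cᵀ = B.submatrix c c`, so the expansion
`H = C (A' + 1) Cᵀ - 1` equals `A' u v` on the whole block `c⁻¹ u × c⁻¹ v` when `u ≠ v`.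
Re-coarsening sums that block, giving `|c⁻¹ u| |c⁻¹ v| A' u v`, which is positive exactly when
`A' u v = 1` because both clusters are nonempty.
-/

open Matrix Finset

section

variable {ι κ : Type*} [DecidableEq κ]

def assignMatrix (R : Type*) [Zero R] [One R] (c : ι → κ) : Matrix ι κ R :=
  of fun i u => if c i = u then 1 else 0

variable {R : Type*} [Semiring R] (c : ι → κ)

theorem assignMatrix_mul_mul_transpose [Fintype κ] (B : Matrix κ κ R) :
    assignMatrix R c * B * (assignMatrix R c)ᵀ = B.submatrix c c := by
  ext i j
  simp [assignMatrix, mul_apply]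

variable [Fintype ι]

theorem transpose_assignMatrix_mul_mul_apply (M : Matrix ι ι R) (u v : κ) :
    ((assignMatrix R c)ᵀ * M * assignMatrix R c) u v =
      ∑ i with c i = u, ∑ j with c j = v, M i j := by
  simp only [assignMatrix, mul_apply, transpose_apply, of_apply, ite_mul, one_mul, zero_mul,
    mul_ite, mul_one, mul_zero]
  simp_rw [← sum_filter]
  exact sum_comm

theorem transpose_assignMatrix_mul_mul_apply_of_forall_eq {M : Matrix ι ι R} {u v : κ} {a : R}
    (hM : ∀ i j, c i = u → c j = v → M i j = a) :
    ((assignMatrix R c)ᵀ * M * assignMatrix R c) u v = #{i | c i = u} * #{j | c j = v} * a := by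
  rw [transpose_assignMatrix_mul_mul_apply, sum_congr rfl fun i hi => sum_congr rfl fun j hj =>
    hM i j (mem_filter.1 hi).2 (mem_filter.1 hj).2]
  simp [mul_assoc]

end

section

variable {ι κ R : Type*} [Fintype κ] [DecidableEq ι] [DecidableEq κ] [Ring R] (c : ι → κ)

def expansion (B : Matrix κ κ R) : Matrix ι ι R :=
  assignMatrix R c * (B + 1) * (assignMatrix R c)ᵀ - 1

theorem expansion_apply_of_ne (B : Matrix κ κ R) {i j : ι} (h : c i ≠ c j) :
    expansion c B i j = B (c i) (c j) := by
  rw [expansion, assignMatrix_mul_mul_transpose]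
  simp [h, ne_of_apply_ne c h]

end

theorem recoarsening_expanded_general
    {n K : ℕ} (A : Matrix (Fin n) (Fin n) ℝ)
    (c : Fin n → Fin K)
    (C : Matrix (Fin n) (Fin K) ℝ)
    (hC : ∀ i u, C i u = if c i = u then 1 else 0)
    (A' : Matrix (Fin K) (Fin K) ℝ)
    (hA' : ∀ u v, A' u v = if u ≠ v ∧ 0 < (Cᵀ * A * C) u v then 1 else 0)
    (H : Matrix (Fin n) (Fin n) ℝ)
    (hH : H = C * (A' + 1) * Cᵀ - 1) :
    ∀ u v, u ≠ v → (∃ i, c i = u) → (∃ j, c j = v) →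
      (if 0 < (Cᵀ * H * C) u v then (1 : ℝ) else 0) = A' u v := by
  rintro _ _ huv ⟨i, rfl⟩ ⟨j, rfl⟩
  obtain rfl : C = assignMatrix ℝ c := ext hC
  obtain rfl : H = expansion c A' := hH
  have hH_block : ∀ i' j', c i' = c i → c j' = c j → expansion c A' i' j' = A' (c i) (c j) := by
    rintro i' j' hi hj
    rw [← hi, ← hj]
    exact expansion_apply_of_ne c A' (hi ▸ hj ▸ huv)
  have hcard : (0 : ℝ) < #{i' | c i' = c i} * #{j' | c j' = c j} :=
    mul_pos (Nat.cast_pos.2 (card_pos.2 ⟨i, by simp⟩)) (Nat.cast_pos.2 (card_pos.2 ⟨j, by simp⟩))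
  rw [transpose_assignMatrix_mul_mul_apply_of_forall_eq c hH_block, hA']
  split_ifs <;> simp_all

/-- Re-coarsening the expanded graph recovers the same inter-cluster coarse adjacency:
for distinct nonempty clusters `u ≠ v`, the coarse adjacency of `H` equals `A'`. -/
theorem recoarsening_expanded
    {n K : ℕ} (A : Matrix (Fin n) (Fin n) ℝ)
    (hA01 : ∀ i j, A i j = 0 ∨ A i j = 1)
    (c : Fin n → Fin K)
    (C : Matrix (Fin n) (Fin K) ℝ)
    (hC : ∀ i u, C i u = if c i = u then 1 else 0)
    (A' : Matrix (Fin K) (Fin K) ℝ)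
    (hA' : ∀ u v, A' u v = if u ≠ v ∧ 0 < (Cᵀ * A * C) u v then 1 else 0)
    (H : Matrix (Fin n) (Fin n) ℝ)
    (hH : H = C * (A' + 1) * Cᵀ - 1) :
    ∀ u v, u ≠ v → (∃ i, c i = u) → (∃ j, c j = v) →
      (if 0 < (Cᵀ * H * C) u v then (1 : ℝ) else 0) = A' u v :=
  recoarsening_expanded_general A c C hC A' hA' H hH
end

section
/- Let p_t(z) = α(t)·𝟙[z = z_1] + (1−α(t))·𝟙[z = z_0] on [k] with differentiable α, α(t) < 1. Define u_t(z, z_t) = (α'(t)/(1−α(t)))·(𝟙[z = z_1] − 𝟙[z = z_t]). Then the continuity (Kolmogorov forward) equation holds: d/dt p_t(z) = Σ_{y ∈ [k]} u_t(z, y) p_t(y) for all z ∈ [k]. -/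
/-! Since `p t` is a probability vector, the flux `∑ y, u z y * p t y` collapses to
`(α' / (1 - α t)) * (𝟙[z = z1] - p t z)`, and `𝟙[z = z1] - p t z = (1 - α t) (𝟙[z = z1] - 𝟙[z = z0])`;
the factor `1 - α t` cancels, leaving `α' (𝟙[z = z1] - 𝟙[z = z0])`, the derivative of `p · z`. -/

section

variable {ι : Type*} [Fintype ι] [DecidableEq ι]

theorem sum_mix_ite_eq_one (a : ℝ) (x₀ x₁ : ι) :
    ∑ z, (a * (if z = x₁ then 1 else 0) + (1 - a) * (if z = x₀ then 1 else 0)) = 1 := by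
  simp only [Finset.sum_add_distrib, ← Finset.mul_sum, Finset.sum_ite_eq', Finset.mem_univ,
    if_true]
  ring

theorem sum_ite_sub_ite_mul_of_sum_eq_one {p : ι → ℝ} (hp : ∑ y, p y = 1) (z x₁ : ι) :
    ∑ y, ((if z = x₁ then 1 else 0) - (if z = y then 1 else 0)) * p y
      = (if z = x₁ then 1 else 0) - p z := by
  simp only [sub_mul, Finset.sum_sub_distrib]
  rw [← Finset.mul_sum, hp, mul_one]
  simp

end

theorem HasDerivAt.mul_add_one_sub_mul {α : ℝ → ℝ} {α' t : ℝ} (h : HasDerivAt α α' t) (a b : ℝ) :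
    HasDerivAt (fun s => α s * a + (1 - α s) * b) (α' * (a - b)) t := by
  rw [show α' * (a - b) = α' * a + (0 - α') * b by ring]
  exact (h.mul_const a).add (((hasDerivAt_const t 1).sub h).mul_const b)

/-- The probability velocity `u_t(z,y) = (α'(t)/(1−α(t)))(𝟙[z=z₁] − 𝟙[z=y])`
satisfies the continuity equation `d/dt p_t(z) = Σ_y u_t(z,y) p_t(y)` for the
interpolant path. -/
theorem interpolant_velocity_continuity_equation
    {k : ℕ} (z0 z1 : Fin k)
    (α : ℝ → ℝ) (α' : ℝ)
    (t : ℝ) (hderiv : HasDerivAt α α' t) (hα1 : α t < 1)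
    (p : ℝ → Fin k → ℝ)
    (hp : ∀ s z, p s z =
      α s * (if z = z1 then 1 else 0) + (1 - α s) * (if z = z0 then 1 else 0))
    (u : Fin k → Fin k → ℝ)
    (hu : ∀ z y, u z y =
      (α' / (1 - α t)) * ((if z = z1 then 1 else 0) - (if z = y then 1 else 0))) :
    ∀ z, HasDerivAt (fun s => p s z) (∑ y, u z y * p t y) t := by
  intro z
  have hmass : ∑ y, p t y = 1 := by simp only [hp]; exact sum_mix_ite_eq_one (α t) z0 z1
  have hne : 1 - α t ≠ 0 := by linarith
  have hflux : ∑ y, u z y * p t y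
      = α' * ((if z = z1 then 1 else 0) - (if z = z0 then 1 else 0)) := by
    simp only [hu, mul_assoc]
    rw [← Finset.mul_sum, sum_ite_sub_ite_mul_of_sum_eq_one hmass, hp]
    field_simp
    ring
  rw [hflux]
  simp only [hp]
  exact hderiv.mul_add_one_sub_mul _ _
end

section
/- One-step exactness of discrete flow matching: with the interpolant path p_t(z) = α(t)𝟙[z=z_1] + (1−α(t))𝟙[z=z_0] and velocity u_t(z,z_t) = (α'(t)/(1−α(t)))(𝟙[z=z_1] − 𝟙[z=z_t]), if α is affine on [t, t+Δ] (so α(t+Δ) = α(t) + α'(t)Δ) and Z_t ~ p_t, then the random variable Z_{t+Δ} sampled from 𝟙[z=Z_t] + Δ·u_t(z, Z_t) satisfies Z_{t+Δ} ~ p_{t+Δ}. -/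
/-!
The update kernel is the mixture `(1 - λ) • id + λ • δ_{z₁}` with `λ = Δ α' / (1 - α t)`: it leaves
a fraction `1 - λ` of the mass of `p_t` in place and moves the rest to `z₁`. Since
`(1 - λ) (1 - α t) = 1 - α t - α' Δ = 1 - α (t + Δ)`, the mass left at `z₀` is that of `p_{t+Δ}`.
-/

open Finset

section JumpKernel

variable {ι R : Type*} [Fintype ι] [DecidableEq ι] [CommRing R]

theorem sum_mul_jumpKernel (q : ι → R) (c : R) (w z : ι) :
    ∑ y, q y * ((if z = y then 1 else 0) +
        c * ((if z = w then 1 else 0) - (if z = y then 1 else 0))) =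
      (1 - c) * q z + c * (if z = w then 1 else 0) * ∑ y, q y := by
  calc ∑ y, q y * ((if z = y then 1 else 0) +
          c * ((if z = w then 1 else 0) - (if z = y then 1 else 0)))
      = ∑ y, ((1 - c) * (if z = y then q y else 0) + c * (if z = w then 1 else 0) * q y) := by
        refine sum_congr rfl fun y _ => ?_
        split_ifs <;> ring
    _ = (1 - c) * q z + c * (if z = w then 1 else 0) * ∑ y, q y := by
        rw [sum_add_distrib, ← mul_sum, ← mul_sum, sum_ite_eq, if_pos (mem_univ z)]

theorem sum_interpolant (β : R) (z₀ z₁ : ι) :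
    ∑ z, (β * (if z = z₁ then 1 else 0) + (1 - β) * (if z = z₀ then 1 else 0)) = 1 := by
  simp only [sum_add_distrib, ← mul_sum, sum_ite_eq', mem_univ, if_true]
  ring

end JumpKernel

theorem dfm_one_step_exactness_general
    {k : ℕ} (z0 z1 : Fin k)
    (α : ℝ → ℝ) (a t Δ : ℝ)
    (haff : α (t + Δ) = α t + a * Δ)
    (hαlt : α t < 1)
    (p : ℝ → Fin k → ℝ)
    (hp : ∀ s z, p s z =
      α s * (if z = z1 then 1 else 0) + (1 - α s) * (if z = z0 then 1 else 0)) :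
    ∀ z, (∑ y, p t y * ((if z = y then 1 else 0) +
        Δ * ((a / (1 - α t)) * ((if z = z1 then 1 else 0) - (if z = y then 1 else 0)))))
      = p (t + Δ) z := by
  intro z
  have hmass : ∑ y, p t y = 1 := by
    simp only [hp]
    exact sum_interpolant (α t) z0 z1
  have hrate : Δ * (a / (1 - α t)) * (1 - α t) = a * Δ := by
    field_simp [(sub_pos.2 hαlt).ne']
  simp only [← mul_assoc]
  rw [sum_mul_jumpKernel, hmass, hp, hp, haff]
  linear_combination ((if z = z1 then (1 : ℝ) else 0) - (if z = z0 then 1 else 0)) * hrate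

/-- One-step exactness of discrete flow matching: if `α` is affine on `[t, t+Δ]`
and `Z_t ~ p_t`, then the update kernel transports `p_t` exactly to `p_{t+Δ}`. -/
theorem dfm_one_step_exactness
    {k : ℕ} (z0 z1 : Fin k)
    (α : ℝ → ℝ) (a t Δ : ℝ)
    (haff : α (t + Δ) = α t + a * Δ)
    (hαlt : α t < 1)
    (hlam0 : 0 ≤ a * Δ / (1 - α t)) (hlam1 : a * Δ / (1 - α t) ≤ 1)
    (p : ℝ → Fin k → ℝ)
    (hp : ∀ s z, p s z =
      α s * (if z = z1 then 1 else 0) + (1 - α s) * (if z = z0 then 1 else 0)) :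
    ∀ z, (∑ y, p t y * ((if z = y then 1 else 0) +
        Δ * ((a / (1 - α t)) * ((if z = z1 then 1 else 0) - (if z = y then 1 else 0)))))
      = p (t + Δ) z :=
  dfm_one_step_exactness_general z0 z1 α a t Δ haff hαlt p hp
end
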